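/- Let λ, μ, ν be partitions of m of lengths exactly p, q, r respectively with p = qr. If μ_q < r·λ_p or ν_r < q·λ_p, then lr(λ, μ; ν) = 0, i.e., there is no pair of Littlewood–Richardson multitableaux of shapes λ and μ with the same content and type ν. -/

import Mathlib

/-- A partition: a weakly decreasing, finitely supported sequence of naturals.
`parts i` is the `(i+1)`-st part (0-indexed). -/
structure YPartition where
  parts : ℕ → ℕ
  antitone : ∀ ⦃i j : ℕ⦄, i ≤ j → parts j ≤ parts i
  support_finite : Set.Finite {i | parts i ≠ 0}

/-- The size `|λ|` of a partition. -/
noncomputable def psize (l : YPartition) : ℕ :=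
  l.support_finite.toFinset.sum l.parts

/-- The length `ℓ(λ)`: the number of positive parts. -/
noncomputable def plength (l : YPartition) : ℕ :=
  l.support_finite.toFinset.card

/-- The empty partition. -/
def pempty : YPartition :=
  ⟨fun _ => 0, fun _ _ _ => le_rfl, by simp⟩

/-- λ + (t^p): add `t` to each of the first `p` parts. -/
def padd (l : YPartition) (p t : ℕ) : YPartition where
  parts i := l.parts i + (if i < p then t else 0)
  antitone := by
    intro i j h
    have h1 := l.antitone h
    try dsimp only
    split_ifs <;> omega
  support_finite := by
    apply Set.Finite.subset (l.support_finite.union (Set.finite_Iio p))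
    intro i hi
    simp only [Set.mem_setOf_eq] at hi
    simp only [Set.mem_union, Set.mem_setOf_eq, Set.mem_Iio]
    by_contra hc
    push_neg at hc
    rw [if_neg (by omega : ¬ i < p)] at hi
    omega

/-- Membership of a cell `(i, j)` (0-indexed) in the Young diagram of `λ`. -/
def memD (l : YPartition) (c : ℕ × ℕ) : Prop := c.2 < l.parts c.1

/-- The conjugate partition. -/
noncomputable def pconj (l : YPartition) : YPartition where
  parts j := Set.ncard {i | j < l.parts i}
  antitone := by
    intro j j' h
    apply Set.ncard_le_ncard
    · intro i hi
      exact lt_of_le_of_lt h hi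
    · exact l.support_finite.subset (by intro i hi; simp only [Set.mem_setOf_eq] at *; omega)
  support_finite := by
    apply Set.Finite.subset (Set.finite_Iio (l.parts 0))
    intro j hj
    simp only [Set.mem_setOf_eq] at hj
    obtain ⟨i, hi⟩ := Set.nonempty_of_ncard_ne_zero hj
    exact Set.mem_Iio.mpr (lt_of_lt_of_le hi (l.antitone (Nat.zero_le i)))

/-- The intersection `λ ∩ μ` of two Young diagrams, as a partition. -/
def pmin (l m : YPartition) : YPartition where
  parts i := min (l.parts i) (m.parts i)
  antitone := fun _ _ h => min_le_min (l.antitone h) (m.antitone h)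
  support_finite := l.support_finite.subset (by intro i hi; simp only [Set.mem_setOf_eq] at *; omega)

/-- The value of the permutation character `φ^c` of `S_m` (induced from the trivial
character of the Young subgroup of type `c`) at `σ`: the number of `σ`-invariant
functions `Fin m → ℕ` with fibre sizes prescribed by `c`. -/
noncomputable def permChar (m : ℕ) (c : ℕ → ℕ) (σ : Equiv.Perm (Fin m)) : ℚ :=
  (Set.ncard {f : Fin m → ℕ | (∀ x, f (σ x) = f x) ∧ ∀ k, Set.ncard {x | f x = k} = c k} : ℚ)

/-- The entries of the Jacobi–Trudi matrix attached to the skew shape `λ/δ`. -/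
def jtEntry (l d : YPartition) (p : ℕ) (w : Equiv.Perm (Fin p)) (k : ℕ) : ℤ :=
  if hk : k < p then
    (l.parts k : ℤ) - (d.parts (w ⟨k, hk⟩) : ℤ) + ((w ⟨k, hk⟩ : ℕ) : ℤ) - (k : ℤ)
  else 0

open Classical in
/-- The skew character `χ^{λ/δ}` of `S_m`, defined via the Jacobi–Trudi determinant
expansion into permutation characters. Here `p` bounds the number of rows used. -/
noncomputable def skewChar (m p : ℕ) (l d : YPartition) (σ : Equiv.Perm (Fin m)) : ℚ :=
  ∑ w : Equiv.Perm (Fin p),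
    if ∀ k, 0 ≤ jtEntry l d p w k then
      ((Equiv.Perm.sign w : ℤ) : ℚ) * permChar m (fun k => (jtEntry l d p w k).toNat) σ
    else 0

/-- The irreducible character `χ^λ` of `S_m`. -/
noncomputable def irrChar (m : ℕ) (l : YPartition) (σ : Equiv.Perm (Fin m)) : ℚ :=
  skewChar m (plength l) l pempty σ

/-- The inner product of class functions on `S_m`. -/
noncomputable def cinner (m : ℕ) (f g : Equiv.Perm (Fin m) → ℚ) : ℚ :=
  (∑ σ : Equiv.Perm (Fin m), f σ * g σ) / (Nat.factorial m : ℚ)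

/-- The Kronecker coefficient `k(λ,μ,ν) = ⟨χ^λ ⊗ χ^μ, χ^ν⟩`. -/
noncomputable def kron (m : ℕ) (l mu nu : YPartition) : ℚ :=
  cinner m (fun σ => irrChar m l σ * irrChar m mu σ) (irrChar m nu)

/-- The cell `(i,j)` lies in the skew shape with outer row lengths `outer` and
inner row lengths `inner`. -/
def InSkew (outer inner : ℕ → ℕ) (c : ℕ × ℕ) : Prop :=
  inner c.1 ≤ c.2 ∧ c.2 < outer c.1

/-- `T` is a semistandard skew tableau of the given skew shape (entries `≥ 1` on the
shape, `0` off it; rows weakly increase, columns strictly increase). -/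
def IsSSYT (outer inner : ℕ → ℕ) (T : ℕ × ℕ → ℕ) : Prop :=
  (∀ c, ¬ InSkew outer inner c → T c = 0) ∧
  (∀ c, InSkew outer inner c → 1 ≤ T c) ∧
  (∀ i j j', InSkew outer inner (i, j) → InSkew outer inner (i, j') → j ≤ j' →
    T (i, j) ≤ T (i, j')) ∧
  (∀ i j, InSkew outer inner (i, j) → InSkew outer inner (i + 1, j) → T (i, j) < T (i + 1, j))

/-- `T` has content `ρ`: the number of entries equal to `k+1` is `ρ k`. -/
def HasContent (T : ℕ × ℕ → ℕ) (ρ : ℕ → ℕ) : Prop :=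
  ∀ k : ℕ, Set.ncard {c : ℕ × ℕ | T c = k + 1} = ρ k

/-- The ballot (lattice word) condition on the reverse reading word of `T`. -/
def Ballot (T : ℕ × ℕ → ℕ) : Prop :=
  ∀ i j k : ℕ,
    Set.ncard {c : ℕ × ℕ | (c.1 < i ∨ (c.1 = i ∧ j ≤ c.2)) ∧ T c = k + 2} ≤
    Set.ncard {c : ℕ × ℕ | (c.1 < i ∨ (c.1 = i ∧ j ≤ c.2)) ∧ T c = k + 1}

/-- `T` is a Littlewood–Richardson tableau of the given skew shape and content `ρ`. -/
def IsLR (outer inner : ℕ → ℕ) (T : ℕ × ℕ → ℕ) (ρ : ℕ → ℕ) : Prop :=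
  IsSSYT outer inner T ∧ HasContent T ρ ∧ Ballot T

/-- `(L, T)` is a Littlewood–Richardson multitableau of shape `l`, contents
`ρ 0, …, ρ (r-1)` and type `π`: `L` is a chain `∅ = L 0 ⊆ L 1 ⊆ ⋯ ⊆ L r = l`
with `|L (i+1)/L i| = π i`, and `T i` is an LR tableau of shape `L (i+1)/L i`
and content `ρ i`.  (Data beyond index `r` is pinned down so that such pairs
can be counted.) -/
def IsLRMulti (l : YPartition) (r : ℕ) (π : ℕ → ℕ) (ρ : ℕ → ℕ → ℕ)
    (L : ℕ → YPartition) (T : ℕ → ℕ × ℕ → ℕ) : Prop :=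
  L 0 = pempty ∧ (∀ i, r ≤ i → L i = l) ∧ (∀ i, r ≤ i → T i = fun _ => 0) ∧
  (∀ i < r, ∀ n, (L i).parts n ≤ (L (i + 1)).parts n) ∧
  (∀ i < r, psize (L (i + 1)) = psize (L i) + π i) ∧
  (∀ i < r, IsLR (L (i + 1)).parts (L i).parts (T i) (ρ i))

/-- `lr(λ, μ; π)`: the number of pairs of Littlewood–Richardson multitableaux of
shapes `λ` and `μ`, the same (partition) contents, and type `π = (π 0, …, π (r-1))`. -/
noncomputable def lrcount (l mu : YPartition) (r : ℕ) (π : ℕ → ℕ) : ℕ :=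
  Set.ncard {x : (ℕ → ℕ → ℕ) × ((ℕ → YPartition) × (ℕ → ℕ × ℕ → ℕ)) ×
      ((ℕ → YPartition) × (ℕ → ℕ × ℕ → ℕ)) |
    (∀ i, r ≤ i → x.1 i = fun _ => 0) ∧
    (∀ i < r, ∀ ⦃a b : ℕ⦄, a ≤ b → x.1 i b ≤ x.1 i a) ∧
    IsLRMulti l r π x.1 x.2.1.1 x.2.1.2 ∧
    IsLRMulti mu r π x.1 x.2.2.1 x.2.2.2}

/-- The Kostka number `K_{κπ}`: the number of semistandard tableaux of shape `κ`
and content `π`. -/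
noncomputable def kostka (k : YPartition) (π : ℕ → ℕ) : ℕ :=
  Set.ncard {T : ℕ × ℕ → ℕ | IsSSYT k.parts (fun _ => 0) T ∧ HasContent T π}

/-!
Every content `ρ(k)` is shared with an LR tableau inside `μ`, which has only `q` rows; by the
ballot condition an entry `v + 1` of an LR tableau lies in row `v` or below, so all entries
(of both multitableaux) are at most `q`, and the entries `q` of the `μ`-side lie in row `q`.
A column `j < λ_p` of `λ` has `p = qr` cells, split among the `r` skew pieces, each of which
receives at most `q` of them (entries `≤ q` strictly increase down columns).  Hence each piece
meets that column in exactly `q` cells carrying the values `1, …, q`.  Consequently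
`ρ(k)_v ≥ λ_p` for all `k < r`, `v < q`, and the last piece has at least `q·λ_p` cells, i.e.
`ν_r ≥ q·λ_p`; on the `μ`-side, the `r` pieces place their `ρ(k)_q ≥ λ_p` entries `q` in
disjoint segments of row `q` of `μ`, so `μ_q ≥ r·λ_p`.
-/

namespace YPartition

theorem parts_ne_zero_iff (l : YPartition) {i : ℕ} : l.parts i ≠ 0 ↔ i < plength l := by
  constructor
  · intro h
    have hsub : Finset.Iic i ⊆ l.support_finite.toFinset := fun j hj => by
      have := l.antitone (Finset.mem_Iic.1 hj)
      simp only [Set.Finite.mem_toFinset, Set.mem_ofPred_eq]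
      omega
    simpa [plength] using Finset.card_le_card hsub
  · intro h h0
    have hsub : l.support_finite.toFinset ⊆ Finset.Iio i := fun j hj => by
      have hj : l.parts j ≠ 0 := by simpa using hj
      have := l.antitone (i := i) (j := j)
      simp only [Finset.mem_Iio]
      omega
    simpa [plength] using (Finset.card_le_card hsub).trans_lt' h

theorem finite_setOf_memD (l : YPartition) : {c : ℕ × ℕ | memD l c}.Finite := by
  refine ((Set.finite_Iio (plength l)).prod (Set.finite_Iio (l.parts 0))).subset fun c hc => ?_
  have := l.antitone (Nat.zero_le c.1)
  exact ⟨l.parts_ne_zero_iff.1 (Nat.ne_zero_of_lt hc), hc.trans_le this⟩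

theorem finite_setOf_inSkew (l : YPartition) (inner : ℕ → ℕ) :
    {c : ℕ × ℕ | InSkew l.parts inner c}.Finite :=
  l.finite_setOf_memD.subset fun _ hc => hc.2

theorem psize_eq_ncard_memD (l : YPartition) : psize l = {c : ℕ × ℕ | memD l c}.ncard := by
  classical
  have hD : {c : ℕ × ℕ | memD l c} = ↑(l.support_finite.toFinset.biUnion
      fun i => ({i} : Finset ℕ) ×ˢ Finset.range (l.parts i)) := by
    ext ⟨i, j⟩
    simp only [memD, Set.mem_ofPred_eq, Finset.coe_biUnion, Set.mem_iUnion, Finset.mem_coe,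
      Finset.mem_product, Finset.mem_singleton, Finset.mem_range, Set.Finite.mem_toFinset]
    exact ⟨fun h => ⟨i, by omega, rfl, h⟩, by rintro ⟨_, _, rfl, h⟩; exact h⟩
  rw [hD, Set.ncard_coe_finset, Finset.card_biUnion]
  · simp [psize]
  · intro i _ i' _ hii'
    simp only [Function.onFun, Finset.disjoint_left, Finset.mem_product, Finset.mem_singleton]
    exact fun _ h h' => hii' (h.1.symm.trans h'.1)

theorem psize_eq_add_ncard_inSkew {d l : YPartition} (h : ∀ i, d.parts i ≤ l.parts i) :
    psize l = psize d + {c : ℕ × ℕ | InSkew l.parts d.parts c}.ncard := by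
  have hunion : {c : ℕ × ℕ | memD l c} =
      {c : ℕ × ℕ | memD d c} ∪ {c : ℕ × ℕ | InSkew l.parts d.parts c} := by
    ext c
    have := h c.1
    simp only [Set.mem_ofPred_eq, Set.mem_union, memD, InSkew]
    omega
  have hdisj : Disjoint {c : ℕ × ℕ | memD d c} {c : ℕ × ℕ | InSkew l.parts d.parts c} :=
    Set.disjoint_left.2 fun c (hc : c.2 < _) (hc' : _ ∧ _) => by omega
  rw [psize_eq_ncard_memD, psize_eq_ncard_memD, hunion,
    Set.ncard_union_eq hdisj d.finite_setOf_memD (l.finite_setOf_inSkew _)]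

end YPartition

namespace IsSSYT

variable {outer inner : ℕ → ℕ} {T : ℕ × ℕ → ℕ}

theorem inSkew_of_ne_zero (hT : IsSSYT outer inner T) {c : ℕ × ℕ} (hc : T c ≠ 0) :
    InSkew outer inner c :=
  not_imp_comm.1 (hT.1 c) hc

theorem finite_setOf_ne_zero {l : YPartition} (hT : IsSSYT l.parts inner T) :
    {c : ℕ × ℕ | T c ≠ 0}.Finite :=
  (l.finite_setOf_inSkew inner).subset fun _ => hT.inSkew_of_ne_zero

theorem finite_setOf_eq_succ {l : YPartition} (hT : IsSSYT l.parts inner T) (v : ℕ) :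
    {c : ℕ × ℕ | T c = v + 1}.Finite :=
  hT.finite_setOf_ne_zero.subset fun _ (hc : _ = _) => by simp [hc]

theorem col_strict {l d : YPartition} (hT : IsSSYT l.parts d.parts T) {i i' j : ℕ}
    (hii' : i < i') (hi : InSkew l.parts d.parts (i, j)) (hi' : InSkew l.parts d.parts (i', j)) :
    T (i, j) < T (i', j) := by
  induction i', hii' using Nat.le_induction with
  | base => exact hT.2.2.2 i j hi hi'
  | succ n hin ih =>
    have hn : InSkew l.parts d.parts (n, j) :=
      ⟨(d.antitone (Nat.le_of_succ_le hin)).trans hi.1, hi'.2.trans_le (l.antitone n.le_succ)⟩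
    exact (ih hn).trans (hT.2.2.2 n j hn hi')

theorem le_of_content_eq_zero {l : YPartition} (hT : IsSSYT l.parts inner T) {ρ : ℕ → ℕ}
    (hρ : HasContent T ρ) {q : ℕ} (hq : ∀ v, q ≤ v → ρ v = 0) (c : ℕ × ℕ) : T c ≤ q := by
  by_contra! hc
  obtain ⟨v, hv⟩ : ∃ v, T c = v + 1 := Nat.exists_eq_add_one.2 (by omega)
  have := (Set.ncard_pos (hT.finite_setOf_eq_succ v)).2 ⟨c, hv⟩
  rw [hρ v, hq v (by omega)] at this
  exact this.false

end IsSSYT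

namespace IsLR

variable {l : YPartition} {inner : ℕ → ℕ} {T : ℕ × ℕ → ℕ} {ρ : ℕ → ℕ}

theorem le_of_eq_succ (hT : IsLR l.parts inner T ρ) {v i j : ℕ} (h : T (i, j) = v + 1) :
    v ≤ i := by
  obtain ⟨hssyt, -, hballot⟩ := hT
  induction v generalizing i j with
  | zero => exact Nat.zero_le i
  | succ v ih =>
    have hpos : 0 < {c : ℕ × ℕ | (c.1 < i ∨ (c.1 = i ∧ j ≤ c.2)) ∧ T c = v + 2}.ncard :=
      (Set.ncard_pos ((hssyt.finite_setOf_eq_succ (v + 1)).subset fun _ hc => hc.2)).2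
        ⟨(i, j), Or.inr ⟨rfl, le_rfl⟩, h⟩
    obtain ⟨⟨i', j'⟩, hprefix, hc⟩ :=
      Set.nonempty_of_ncard_ne_zero (hpos.trans_le (hballot i j v)).ne'
    simp only at hprefix
    rcases hprefix with hlt | ⟨rfl, hle⟩
    · have := ih hc
      omega
    · have := hssyt.2.2.1 i' j j' (hssyt.inSkew_of_ne_zero (by omega))
        (hssyt.inSkew_of_ne_zero (by omega)) hle
      omega

theorem content_le (hT : IsLR l.parts inner T ρ) {v : ℕ} (hv : l.parts (v + 1) = 0) :
    ρ v ≤ l.parts v - inner v := by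
  have hsub : {c : ℕ × ℕ | T c = v + 1} ⊆
      ((Finset.Ico (inner v) (l.parts v)).image fun j => (v, j) : Set (ℕ × ℕ)) := by
    rintro ⟨i, j⟩ (hc : T (i, j) = v + 1)
    have hskew := hT.1.inSkew_of_ne_zero (c := (i, j)) (by omega)
    have hvi := hT.le_of_eq_succ hc
    obtain rfl : i = v := by
      by_contra hne
      have := l.antitone (show v + 1 ≤ i by omega)
      exact absurd hskew.2 (by simp only; omega)
    simpa [InSkew] using hskew
  calc ρ v = {c : ℕ × ℕ | T c = v + 1}.ncard := (hT.2.1 v).symm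
    _ ≤ ((Finset.Ico (inner v) (l.parts v)).image fun j => (v, j)).card :=
      (Set.ncard_le_ncard hsub (Finset.finite_toSet _)).trans_eq (Set.ncard_coe_finset _)
    _ ≤ l.parts v - inner v := Finset.card_image_le.trans_eq (Nat.card_Ico _ _)

end IsLR

namespace IsLRMulti

variable {l : YPartition} {r : ℕ} {π : ℕ → ℕ} {ρ : ℕ → ℕ → ℕ} {L : ℕ → YPartition}
  {T : ℕ → ℕ × ℕ → ℕ}

theorem monotone_parts (h : IsLRMulti l r π ρ L T) (n : ℕ) : Monotone fun k => (L k).parts n := by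
  refine monotone_nat_of_le_succ fun k => ?_
  rcases lt_or_ge k r with hk | hk
  · exact h.2.2.2.1 k hk n
  · simp only [h.2.1 k hk, h.2.1 (k + 1) (by omega), le_refl]

theorem parts_le (h : IsLRMulti l r π ρ L T) (k n : ℕ) : (L k).parts n ≤ l.parts n := by
  simpa [h.2.1 (max k r) (le_max_right k r)] using h.monotone_parts n (le_max_left k r)

theorem exists_inSkew (h : IsLRMulti l r π ρ L T) {c : ℕ × ℕ} (hc : memD l c) :
    ∃ k < r, InSkew (L (k + 1)).parts (L k).parts c := by
  have hex : ∃ k, c.2 < (L k).parts c.1 := ⟨r, by rwa [h.2.1 r le_rfl]⟩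
  obtain ⟨k, hk⟩ : ∃ k, Nat.find hex = k + 1 := Nat.exists_eq_succ_of_ne_zero fun h0 => by
    have := Nat.find_spec hex
    rw [h0, h.1] at this
    exact Nat.not_lt_zero _ this
  have hmin : (L k).parts c.1 ≤ c.2 := not_lt.1 (Nat.find_min hex (by omega))
  refine ⟨k, ?_, hmin, hk ▸ Nat.find_spec hex⟩
  by_contra! hkr
  rw [h.2.1 k hkr] at hmin
  exact absurd hc (not_lt.2 hmin)

theorem ncard_inSkew (h : IsLRMulti l r π ρ L T) {k : ℕ} (hk : k < r) :
    {c : ℕ × ℕ | InSkew (L (k + 1)).parts (L k).parts c}.ncard = π k := by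
  have := YPartition.psize_eq_add_ncard_inSkew (h.2.2.2.1 k hk)
  have := h.2.2.2.2.1 k hk
  omega

theorem content_eq_zero (h : IsLRMulti l r π ρ L T) {k v : ℕ} (hk : k < r)
    (hv : l.parts v = 0) : ρ k v = 0 := by
  have hv' : (L (k + 1)).parts (v + 1) = 0 :=
    Nat.eq_zero_of_le_zero ((h.parts_le _ _).trans ((l.antitone v.le_succ).trans hv.le))
  have := (h.2.2.2.2.2 k hk).content_le hv'
  have := h.parts_le (k + 1) v
  omega

theorem sum_content_le (h : IsLRMulti l r π ρ L T) {v : ℕ} (hv : l.parts (v + 1) = 0) :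
    ∑ k ∈ Finset.range r, ρ k v ≤ l.parts v :=
  calc ∑ k ∈ Finset.range r, ρ k v
      ≤ ∑ k ∈ Finset.range r, ((L (k + 1)).parts v - (L k).parts v) :=
        Finset.sum_le_sum fun k hk => (h.2.2.2.2.2 k (Finset.mem_range.1 hk)).content_le
          (Nat.eq_zero_of_le_zero (hv ▸ h.parts_le _ _))
    _ = (L r).parts v - (L 0).parts v := Finset.sum_range_tsub (h.monotone_parts v) r
    _ = l.parts v := by rw [h.2.1 r le_rfl, h.1]; rfl

/-- Pigeonhole: the `qr` cells of column `j` inject into `(piece, value) ∈ [0, r) × [0, q)`. -/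
theorem exists_eq_succ (h : IsLRMulti l r π ρ L T) {q j : ℕ}
    (hρ : ∀ k < r, ∀ v, q ≤ v → ρ k v = 0) (hj : ∀ i < q * r, j < l.parts i)
    {k v : ℕ} (hk : k < r) (hv : v < q) : ∃ i, T k (i, j) = v + 1 := by
  have hLR := h.2.2.2.2.2
  choose! κ hκr hκ using fun i (hi : i < q * r) => h.exists_inSkew (c := (i, j)) (hj i hi)
  have hpos : ∀ i < q * r, 1 ≤ T (κ i) (i, j) := fun i hi =>
    (hLR _ (hκr i hi)).1.2.1 _ (hκ i hi)
  have hle : ∀ i < q * r, T (κ i) (i, j) ≤ q := fun i hi =>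
    (hLR _ (hκr i hi)).1.le_of_content_eq_zero (hLR _ (hκr i hi)).2.1 (hρ _ (hκr i hi)) _
  obtain ⟨i, hi, hkv⟩ := Finset.surj_on_of_inj_on_of_card_le
    (s := Finset.range (q * r)) (t := Finset.range r ×ˢ Finset.range q)
    (fun i _ => (κ i, T (κ i) (i, j) - 1))
    (fun i hi => by
      have := hκr i (Finset.mem_range.1 hi)
      have := hpos i (Finset.mem_range.1 hi)
      have := hle i (Finset.mem_range.1 hi)
      simp only [Finset.mem_product, Finset.mem_range]
      omega)
    (fun i i' hi hi' hii' => by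
      simp only [Finset.mem_range, Prod.mk.injEq] at hi hi' hii'
      obtain ⟨hκii', hTii'⟩ := hii'
      have hi₁ := hκ i hi
      have hi₂ := hκ i' hi'
      have := hpos i hi
      have hpos' := hpos i' hi'
      rw [← hκii'] at hi₂ hTii' hpos'
      by_contra hne
      rcases Nat.lt_or_gt_of_ne hne with hlt | hlt
      · have := (hLR _ (hκr i hi)).1.col_strict hlt hi₁ hi₂
        omega
      · have := (hLR _ (hκr i hi)).1.col_strict hlt hi₂ hi₁
        omega)
    (by simp [Nat.mul_comm]) (k, v) (by simp [hk, hv])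
  simp only [Prod.mk.injEq] at hkv
  obtain ⟨rfl, hv⟩ := hkv
  exact ⟨i, by have := hpos i (Finset.mem_range.1 hi); omega⟩

theorem le_content (h : IsLRMulti l r π ρ L T) {q a : ℕ}
    (hρ : ∀ k < r, ∀ v, q ≤ v → ρ k v = 0) (hl : ∀ i < q * r, a ≤ l.parts i)
    {k v : ℕ} (hk : k < r) (hv : v < q) : a ≤ ρ k v := by
  choose! ι hι using fun j (hj : j < a) =>
    h.exists_eq_succ hρ (fun i hi => hj.trans_le (hl i hi)) hk hv
  rw [← (h.2.2.2.2.2 k hk).2.1 v]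
  simpa using Set.ncard_le_ncard_of_injOn (fun j => (ι j, j)) (s := (Finset.range a : Set ℕ))
    (fun j hj => hι j (by simpa using hj)) (fun _ _ _ _ h => congrArg Prod.snd h)
    ((h.2.2.2.2.2 k hk).1.finite_setOf_eq_succ v)

theorem mul_le_ncard_inSkew (h : IsLRMulti l r π ρ L T) {q a : ℕ}
    (hρ : ∀ k < r, ∀ v, q ≤ v → ρ k v = 0) (hl : ∀ i < q * r, a ≤ l.parts i)
    {k : ℕ} (hk : k < r) : q * a ≤ {c : ℕ × ℕ | InSkew (L (k + 1)).parts (L k).parts c}.ncard := by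
  choose! ι hι using fun (x : ℕ × ℕ) (hx : x.1 < q ∧ x.2 < a) =>
    h.exists_eq_succ hρ (j := x.2) (fun i hi => hx.2.trans_le (hl i hi)) hk hx.1
  have hmem : ∀ x ∈ (Finset.range q ×ˢ Finset.range a : Set (ℕ × ℕ)), T k (ι x, x.2) = x.1 + 1 :=
    fun x hx => hι x (by simpa using hx)
  have := Set.ncard_le_ncard_of_injOn (fun x => (ι x, x.2)) (t := {c | InSkew _ _ c})
    (fun x hx => (h.2.2.2.2.2 k hk).1.inSkew_of_ne_zero (by simp [hmem x hx]))
    (fun x hx y hy hxy => by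
      simp only [Prod.mk.injEq] at hxy
      have hx' := hmem x hx
      have hy' := hmem y hy
      rw [hxy.1, hxy.2] at hx'
      exact Prod.ext (by omega) hxy.2)
    ((L (k + 1)).finite_setOf_inSkew _)
  simpa [Set.ncard_coe_finset] using this

end IsLRMulti

theorem lrcount_eq_zero_general (p q r : ℕ) (lam mu nu : YPartition)
    (hlp : plength lam = p) (hlq : plength mu = q)
    (hpqr : p = q * r)
    (hcond : mu.parts (q - 1) < r * lam.parts (p - 1) ∨
      nu.parts (r - 1) < q * lam.parts (p - 1)) :
    lrcount lam mu r nu.parts = 0 := by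
  by_contra hne
  obtain ⟨⟨ρ, ⟨L, S⟩, M, T⟩, -, -, hL, hM⟩ := Set.nonempty_of_ncard_ne_zero hne
  set a := lam.parts (p - 1)
  have ha : a ≠ 0 := fun ha => by simp [ha] at hcond
  have hp : 0 < p := by have := lam.parts_ne_zero_iff.1 ha; omega
  have hq : 0 < q := Nat.pos_of_ne_zero fun hq => by simp [hq] at hpqr; omega
  have hr : 0 < r := Nat.pos_of_ne_zero fun hr => by simp [hr] at hpqr; omega
  have hmu : ∀ v, q ≤ v → mu.parts v = 0 := fun v hv => by
    by_contra h
    have := mu.parts_ne_zero_iff.1 h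
    omega
  have hρ : ∀ k < r, ∀ v, q ≤ v → ρ k v = 0 := fun k hk v hv => hM.content_eq_zero hk (hmu v hv)
  have hlam : ∀ i < q * r, a ≤ lam.parts i := fun i hi => lam.antitone (by omega)
  rcases hcond with hcond | hcond
  · have : r * a ≤ mu.parts (q - 1) :=
      calc r * a = ∑ _k ∈ Finset.range r, a := by simp
        _ ≤ ∑ k ∈ Finset.range r, ρ k (q - 1) := Finset.sum_le_sum fun k hk =>
          hL.le_content hρ hlam (Finset.mem_range.1 hk) (by omega)
        _ ≤ mu.parts (q - 1) := hM.sum_content_le (hmu _ (by omega))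
    omega
  · have := hL.mul_le_ncard_inSkew hρ hlam (k := r - 1) (by omega)
    rw [hL.ncard_inSkew (by omega)] at this
    omega

/-- **Lemma.** If `λ, μ, ν ⊢ m` have lengths exactly `p, q, r` with `p = qr`, and
`μ_q < r·λ_p` or `ν_r < q·λ_p`, then `lr(λ, μ; ν) = 0`. -/
theorem lrcount_eq_zero (m p q r : ℕ) (lam mu nu : YPartition)
    (hlam : psize lam = m) (hmu : psize mu = m) (hnu : psize nu = m)
    (hlp : plength lam = p) (hlq : plength mu = q) (hlr : plength nu = r)
    (hpqr : p = q * r)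
    (hcond : mu.parts (q - 1) < r * lam.parts (p - 1) ∨
      nu.parts (r - 1) < q * lam.parts (p - 1)) :
    lrcount lam mu r nu.parts = 0 :=
  lrcount_eq_zero_general p q r lam mu nu hlp hlq hpqr hcond
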